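/- Let M be a metric space with base point 0, and let n ∈ ℕ, λ₁,…,λₙ > 0 with Σλᵢ = 1, and pairs (xᵢ, yᵢ) with xᵢ ≠ yᵢ such that μ := Σᵢ λᵢ m_{xᵢyᵢ} has norm 1 in F(M). Then for any m ≥ 1 and indices k₁,…,k_{m+1} ∈ {1,…,n} with k₁ = k_{m+1}, one has Σ_{j=1}^m d(x_{k_j}, y_{k_{j+1}}) ≥ Σ_{j=1}^m d(x_{k_j}, y_{k_j}). -/

import Mathlib

/-- An abstract characterization of the Lipschitz-free space `F(M)` over a pointed
metric space `(M, base)`: a normed space `X` together with a map `δ : M → X`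
(the canonical embedding) such that `δ base = 0`, the span of `δ(M)` is dense,
every `1`-Lipschitz function vanishing at the base point extends to a functional of
norm at most one, and every functional of norm at most one induces a `1`-Lipschitz
function on `M`. These properties determine `F(M)` up to isometric isomorphism. -/
structure IsLipschitzFreeSpace (M : Type*) [MetricSpace M] (base : M)
    (X : Type*) [NormedAddCommGroup X] [NormedSpace ℝ X] (δ : M → X) : Prop where
  map_base : δ base = 0
  dense_span : (Submodule.span ℝ (Set.range δ)).topologicalClosure = ⊤
  extend_lipschitz : ∀ g : M → ℝ, LipschitzWith 1 g → g base = 0 →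
    ∃ φ : X →L[ℝ] ℝ, ‖φ‖ ≤ 1 ∧ ∀ p, φ (δ p) = g p
  lipschitz_of_dual : ∀ φ : X →L[ℝ] ℝ, ‖φ‖ ≤ 1 →
    LipschitzWith 1 (fun p => φ (δ p))

/-- The molecule `m_{xy} = (δ_x - δ_y) / d(x,y)`. -/
noncomputable def molecule {M : Type*} [MetricSpace M]
    {X : Type*} [NormedAddCommGroup X] [NormedSpace ℝ X]
    (δ : M → X) (x y : M) : X :=
  (dist x y)⁻¹ • (δ x - δ y)

/-- `μ` is a Daugavet-point: every slice `S(f,α)` of the unit ball contains, for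
every `ε > 0`, an element at distance at least `2 - ε` from `μ`. -/
def IsDaugavetPoint {X : Type*} [NormedAddCommGroup X] [NormedSpace ℝ X]
    (μ : X) : Prop :=
  ∀ f : X →L[ℝ] ℝ, ‖f‖ = 1 → ∀ α : ℝ, 0 < α → ∀ ε : ℝ, 0 < ε →
    ∃ ν : X, ‖ν‖ ≤ 1 ∧ f ν > 1 - α ∧ 2 - ε ≤ ‖μ - ν‖

/-- `μ` is a Δ-point: every slice `S(f,α)` of the unit ball containing `μ`
contains, for every `ε > 0`, an element at distance at least `2 - ε` from `μ`. -/
def IsDeltaPoint {X : Type*} [NormedAddCommGroup X] [NormedSpace ℝ X]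
    (μ : X) : Prop :=
  ∀ f : X →L[ℝ] ℝ, ‖f‖ = 1 → ∀ α : ℝ, 0 < α → f μ > 1 - α →
    ∀ ε : ℝ, 0 < ε → ∃ ν : X, ‖ν‖ ≤ 1 ∧ f ν > 1 - α ∧ 2 - ε ≤ ‖μ - ν‖

/-- `ν` is a denting point of the unit ball: `‖ν‖ ≤ 1` and `ν` belongs to slices of
the unit ball of arbitrarily small diameter. -/
def IsDentingPoint {X : Type*} [NormedAddCommGroup X] [NormedSpace ℝ X]
    (ν : X) : Prop :=
  ‖ν‖ ≤ 1 ∧ ∀ ε : ℝ, 0 < ε → ∃ f : X →L[ℝ] ℝ, ∃ α : ℝ, ‖f‖ = 1 ∧ 0 < α ∧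
    f ν > 1 - α ∧ ∀ w w' : X, ‖w‖ ≤ 1 → f w > 1 - α → ‖w'‖ ≤ 1 → f w' > 1 - α →
      ‖w - w'‖ < ε


/-! A norming functional `φ` of `μ` gives the `1`-Lipschitz function `g = φ ∘ δ`. Since `φ μ` is a
convex combination of the slopes `(g xᵢ - g yᵢ) / d(xᵢ, yᵢ) ≤ 1` and equals `1`, every slope is `1`,
i.e. `g` attains `d(xᵢ, yᵢ)` on each pair. Around a cycle, `g (x_{kⱼ}) - g (y_{kⱼ₊₁}) ≤ d(x_{kⱼ}, y_{kⱼ₊₁})`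
sums, after telescoping the terms `g (y_{kⱼ}) - g (y_{kⱼ₊₁})`, to the cyclic inequality. -/

theorem LipschitzWith.sub_le_dist {M : Type*} [PseudoMetricSpace M] {g : M → ℝ}
    (hg : LipschitzWith 1 g) (p q : M) : g p - g q ≤ dist p q := by
  simpa [sub_le_iff_le_add, add_comm] using hg.le_add_mul p q

theorem LipschitzWith.inv_dist_mul_sub_le_one {M : Type*} [PseudoMetricSpace M] {g : M → ℝ}
    (hg : LipschitzWith 1 g) (p q : M) : (dist p q)⁻¹ * (g p - g q) ≤ 1 := by
  rcases eq_or_lt_of_le (dist_nonneg : 0 ≤ dist p q) with hpq | hpq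
  · simp [← hpq]
  · rw [inv_mul_le_iff₀ hpq, mul_one]
    exact hg.sub_le_dist p q

theorem Finset.eq_one_of_sum_mul_eq_one {ι : Type*} {s : Finset ι} {w t : ι → ℝ}
    (hw : ∀ i ∈ s, 0 < w i) (hw_sum : ∑ i ∈ s, w i = 1) (ht : ∀ i ∈ s, t i ≤ 1)
    (h : ∑ i ∈ s, w i * t i = 1) : ∀ i ∈ s, t i = 1 := by
  have hle : ∀ i ∈ s, w i * t i ≤ w i := fun i hi =>
    mul_le_of_le_one_right (hw i hi).le (ht i hi)
  have heq := (Finset.sum_eq_sum_iff_of_le hle).1 (h.trans hw_sum.symm)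
  exact fun i hi => (mul_eq_left₀ (hw i hi).ne').1 (heq i hi)

theorem sum_dist_le_sum_dist_of_cycle {M ι : Type*} [PseudoMetricSpace M] {g : M → ℝ}
    (hg : LipschitzWith 1 g) {x y : ι → M} (hxy : ∀ i, g (x i) - g (y i) = dist (x i) (y i))
    (m : ℕ) (k : ℕ → ι) (hk : k m = k 0) :
    ∑ j ∈ Finset.range m, dist (x (k j)) (y (k j)) ≤
      ∑ j ∈ Finset.range m, dist (x (k j)) (y (k (j + 1))) := by
  have htelescope : ∑ j ∈ Finset.range m, (g (y (k j)) - g (y (k (j + 1)))) = 0 := by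
    rw [Finset.sum_range_sub' (fun j => g (y (k j))) m, hk, sub_self]
  calc ∑ j ∈ Finset.range m, dist (x (k j)) (y (k j))
      = ∑ j ∈ Finset.range m, ((g (x (k j)) - g (y (k j))) + (g (y (k j)) - g (y (k (j + 1))))) := by
        rw [Finset.sum_add_distrib, htelescope, add_zero]
        exact Finset.sum_congr rfl fun j _ => (hxy _).symm
    _ = ∑ j ∈ Finset.range m, (g (x (k j)) - g (y (k (j + 1)))) :=
        Finset.sum_congr rfl fun j _ => by ring
    _ ≤ ∑ j ∈ Finset.range m, dist (x (k j)) (y (k (j + 1))) :=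
        Finset.sum_le_sum fun j _ => hg.sub_le_dist _ _

theorem IsLipschitzFreeSpace.exists_lipschitz_sub_eq_dist {M : Type*} [MetricSpace M] {base : M}
    {X : Type*} [NormedAddCommGroup X] [NormedSpace ℝ X] {δ : M → X}
    (hfree : IsLipschitzFreeSpace M base X δ) {ι : Type*} [Fintype ι] {lam : ι → ℝ}
    {x y : ι → M} (hlam : ∀ i, 0 < lam i) (hsum : ∑ i, lam i = 1)
    (hnorm : ‖∑ i, lam i • molecule δ (x i) (y i)‖ = 1) :
    ∃ g : M → ℝ, LipschitzWith 1 g ∧ ∀ i, g (x i) - g (y i) = dist (x i) (y i) := by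
  obtain ⟨φ, hφ, hφμ⟩ := exists_dual_vector ℝ (∑ i, lam i • molecule δ (x i) (y i)) (by simp [hnorm])
  have hg : LipschitzWith 1 (fun p => φ (δ p)) := hfree.lipschitz_of_dual φ hφ.le
  refine ⟨fun p => φ (δ p), hg, fun i => ?_⟩
  have hslopes : ∑ i, lam i * ((dist (x i) (y i))⁻¹ * (φ (δ (x i)) - φ (δ (y i)))) = 1 := by
    rw [hnorm] at hφμ
    simpa [molecule, mul_assoc] using hφμ
  have hslope := Finset.eq_one_of_sum_mul_eq_one (fun i _ => hlam i) hsum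
    (fun i _ => hg.inv_dist_mul_sub_le_one (x i) (y i)) hslopes i (Finset.mem_univ i)
  -- `0⁻¹ = 0`, so a slope equal to `1` forces `x i ≠ y i`.
  have hdist : dist (x i) (y i) ≠ 0 := fun h => by simp [h] at hslope
  exact ((inv_mul_eq_one₀ hdist).1 hslope).symm

theorem stmt15_general {M : Type*} [MetricSpace M] (base : M)
    {X : Type*} [NormedAddCommGroup X] [NormedSpace ℝ X] (δ : M → X)
    (hfree : IsLipschitzFreeSpace M base X δ)
    (n : ℕ) (lam : Fin n → ℝ) (x y : Fin n → M)
    (hlam : ∀ i, 0 < lam i) (hsum : ∑ i, lam i = 1)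
    (hnorm : ‖∑ i, lam i • molecule δ (x i) (y i)‖ = 1) :
    ∀ m : ℕ, 1 ≤ m → ∀ k : ℕ → Fin n, k m = k 0 →
      ∑ j ∈ Finset.range m, dist (x (k j)) (y (k (j + 1))) ≥
        ∑ j ∈ Finset.range m, dist (x (k j)) (y (k j)) := by
  intro m _ k hk
  obtain ⟨g, hg, hgxy⟩ := hfree.exists_lipschitz_sub_eq_dist hlam hsum hnorm
  exact sum_dist_le_sum_dist_of_cycle hg hgxy m k hk

/-- if `μ = Σᵢ λᵢ m_{xᵢyᵢ}` is a norm-one convex combination of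
molecules, then the cyclic inequality
`Σⱼ d(x_{kⱼ}, y_{k_{j+1}}) ≥ Σⱼ d(x_{kⱼ}, y_{kⱼ})` holds for every cycle of
indices. -/
theorem stmt15 {M : Type*} [MetricSpace M] (base : M)
    {X : Type*} [NormedAddCommGroup X] [NormedSpace ℝ X] (δ : M → X)
    (hfree : IsLipschitzFreeSpace M base X δ)
    (n : ℕ) (lam : Fin n → ℝ) (x y : Fin n → M)
    (hlam : ∀ i, 0 < lam i) (hsum : ∑ i, lam i = 1)
    (hxy : ∀ i, x i ≠ y i)
    (hnorm : ‖∑ i, lam i • molecule δ (x i) (y i)‖ = 1) :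
    ∀ m : ℕ, 1 ≤ m → ∀ k : ℕ → Fin n, k m = k 0 →
      ∑ j ∈ Finset.range m, dist (x (k j)) (y (k (j + 1))) ≥
        ∑ j ∈ Finset.range m, dist (x (k j)) (y (k j)) :=
  stmt15_general base δ hfree n lam x y hlam hsum hnorm
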